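/- Let a : Fin n → ℝ be nonzero reals (n ≥ 1) and set β k = 1 − 1/(a k). Then all of the numbers β 0 − β 1, …, β (n−2) − β (n−1), β (n−1) are positive if and only if exactly one of the following holds: (i) a (n−1) < ⋯ < a 0 < 0; (ii) there is k with a k < ⋯ < a 0 < 0 < 1 < a (n−1) < ⋯ < a (k+1); (iii) 1 < a (n−1) < ⋯ < a 0. -/
import Mathlib

lemma fmc_beta_pos_iff {x : ℝ} (hx : x ≠ 0) : 0 < 1 - 1 / x ↔ x < 0 ∨ 1 < x := by
  rcases lt_or_gt_of_ne hx with h | h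
  · have : 1 / x < 0 := div_neg_of_pos_of_neg one_pos h
    exact ⟨fun _ => Or.inl h, fun _ => by linarith⟩
  · constructor
    · intro hb
      have h1 : 1 / x < 1 := by linarith
      exact Or.inr (by have := (div_lt_one h).mp h1; linarith)
    · rintro (hb | hb)
      · linarith
      · have : 1 / x < 1 := (div_lt_one (by linarith)).mpr hb
        linarith

lemma fmc_beta_lt_neg {x y : ℝ} (hx : x < 0) (hy : y < 0) :
    1 - 1 / y < 1 - 1 / x ↔ y < x := by
  rw [sub_lt_sub_iff_left, one_div_lt_one_div_of_neg hx hy]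

lemma fmc_beta_lt_pos {x y : ℝ} (hx : 1 < x) (hy : 1 < y) :
    1 - 1 / y < 1 - 1 / x ↔ y < x := by
  rw [sub_lt_sub_iff_left, one_div_lt_one_div (by linarith) (by linarith)]

lemma fmc_beta_gt_one {x : ℝ} (hx : x < 0) : 1 < 1 - 1 / x := by
  have : 1 / x < 0 := div_neg_of_pos_of_neg one_pos hx
  linarith

lemma fmc_beta_lt_one {x : ℝ} (hx : 1 < x) : 1 - 1 / x < 1 := by
  have : 0 < 1 / x := div_pos one_pos (by linarith)
  linarith

lemma fmc_chain {n : ℕ} (f : Fin n → ℝ) (lo hi : ℕ) (hhi : hi < n)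
    (step : ∀ k (hk1 : lo ≤ k) (hk2 : k + 1 ≤ hi), f ⟨k + 1, by omega⟩ < f ⟨k, by omega⟩) :
    ∀ i j (h1 : lo ≤ i) (h2 : i < j) (h3 : j ≤ hi), f ⟨j, by omega⟩ < f ⟨i, by omega⟩ := by
  intro i j hlo hij hj
  induction j with
  | zero => omega
  | succ m ih =>
    rcases Nat.lt_or_ge i m with h | h
    · exact lt_trans (step m (by omega) (by omega)) (ih h (by omega))
    · have heq : i = m := by omega
      subst heq
      exact step i hlo hj

/-- With `β k = 1 − 1/(a k)`, the quantities
`β 0 − β 1, …, β (n−2) − β (n−1), β (n−1)` are all positive iff exactly one of: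
(i) `a (n−1) < ⋯ < a 0 < 0`;
(ii) there is `k` with `a k < ⋯ < a 0 < 0 < 1 < a (n−1) < ⋯ < a (k+1)`;
(iii) `1 < a (n−1) < ⋯ < a 0`. -/
theorem flat_minimum_criterion (n : ℕ) (hn : 1 ≤ n) (a : Fin n → ℝ) (ha : ∀ k, a k ≠ 0)
    (β : Fin n → ℝ) (hβ : ∀ k, β k = 1 - 1 / a k)
    (D : Fin n → ℝ)
    (hD : ∀ k : Fin n, D k = if h : (k : ℕ) + 1 < n then β k - β ⟨(k : ℕ) + 1, h⟩ else β k)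
    (P₁ P₂ P₃ : Prop)
    (hP₁ : P₁ ↔ ((∀ i j : Fin n, i < j → a j < a i) ∧ a ⟨0, hn⟩ < 0))
    (hP₂ : P₂ ↔ (∃ k : Fin n, (k : ℕ) + 1 < n ∧
      (∀ i j : Fin n, i < j → j ≤ k → a j < a i) ∧ a ⟨0, hn⟩ < 0 ∧
      (∀ i j : Fin n, k < i → i < j → a j < a i) ∧ 1 < a ⟨n - 1, by omega⟩))
    (hP₃ : P₃ ↔ ((∀ i j : Fin n, i < j → a j < a i) ∧ 1 < a ⟨n - 1, by omega⟩)) :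
    (∀ k, 0 < D k) ↔
      ((P₁ ∧ ¬P₂ ∧ ¬P₃) ∨ (¬P₁ ∧ P₂ ∧ ¬P₃) ∨ (¬P₁ ∧ ¬P₂ ∧ P₃)) := by
  classical
  have hn1 : n - 1 < n := by omega
  -- Exclusivity facts
  have e1a : P₁ → a ⟨0, hn⟩ < 0 := fun h => (hP₁.mp h).2
  have e1b : P₁ → a ⟨n - 1, hn1⟩ < 0 := by
    intro h
    obtain ⟨hdec, h0⟩ := hP₁.mp h
    rcases Nat.eq_or_lt_of_le hn with h1 | h1
    · have : (⟨n - 1, hn1⟩ : Fin n) = ⟨0, hn⟩ := by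
        apply Fin.ext; simp; omega
      rw [this]; exact h0
    · have := hdec ⟨0, hn⟩ ⟨n - 1, hn1⟩ (by show (0:ℕ) < n - 1; omega)
      linarith
  have e2a : P₂ → a ⟨0, hn⟩ < 0 := by
    intro h; obtain ⟨k, _, _, h0, _, _⟩ := hP₂.mp h; exact h0
  have e2b : P₂ → 1 < a ⟨n - 1, hn1⟩ := by
    intro h; obtain ⟨k, _, _, _, _, hL⟩ := hP₂.mp h; exact hL
  have e3a : P₃ → 1 < a ⟨0, hn⟩ := by
    intro h
    obtain ⟨hdec, hL⟩ := hP₃.mp h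
    rcases Nat.eq_or_lt_of_le hn with h1 | h1
    · have : (⟨n - 1, hn1⟩ : Fin n) = ⟨0, hn⟩ := by
        apply Fin.ext; simp; omega
      rw [this] at hL; exact hL
    · have := hdec ⟨0, hn⟩ ⟨n - 1, hn1⟩ (by show (0:ℕ) < n - 1; omega)
      linarith
  have excl12 : ¬(P₁ ∧ P₂) := fun ⟨h1, h2⟩ => by
    have := e1b h1; have := e2b h2; linarith
  have excl13 : ¬(P₁ ∧ P₃) := fun ⟨h1, h3⟩ => by
    have := e1a h1; have := e3a h3; linarith
  have excl23 : ¬(P₂ ∧ P₃) := fun ⟨h2, h3⟩ => by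
    have := e2a h2; have := e3a h3; linarith
  -- Key equivalence
  have key : (∀ k, 0 < D k) ↔ (P₁ ∨ P₂ ∨ P₃) := by
    constructor
    · intro hC
      have hadj : ∀ k (hk : k + 1 < n), β ⟨k + 1, hk⟩ < β ⟨k, by omega⟩ := by
        intro k hk
        have hc := hC ⟨k, by omega⟩
        rw [hD] at hc
        simp only [show ((⟨k, by omega⟩ : Fin n) : ℕ) = k from rfl, dif_pos hk] at hc
        linarith
      have hlast : 0 < β ⟨n - 1, hn1⟩ := by
        have hc := hC ⟨n - 1, hn1⟩
        rw [hD] at hc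
        simp only [show ((⟨n - 1, hn1⟩ : Fin n) : ℕ) = n - 1 from rfl,
          dif_neg (show ¬(n - 1 + 1 < n) by omega)] at hc
        exact hc
      have hβpos : ∀ m (hm : m < n), 0 < β ⟨m, hm⟩ := by
        intro m hm
        rcases Nat.eq_or_lt_of_le (show m ≤ n - 1 by omega) with h | h
        · have : (⟨m, hm⟩ : Fin n) = ⟨n - 1, hn1⟩ := by apply Fin.ext; simpa using h
          rw [this]; exact hlast
        · have := fmc_chain β 0 (n - 1) hn1
            (fun k _ hk2 => hadj k (by omega)) m (n - 1) (by omega) h (le_refl _)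
          linarith
      have hsign : ∀ m (hm : m < n), a ⟨m, hm⟩ < 0 ∨ 1 < a ⟨m, hm⟩ := by
        intro m hm
        have := hβpos m hm
        rw [hβ] at this
        exact (fmc_beta_pos_iff (ha _)).mp this
      have hstepS : ∀ k (hk : k + 1 < n), 1 < a ⟨k, by omega⟩ → 1 < a ⟨k + 1, hk⟩ := by
        intro k hk hbig
        rcases hsign (k + 1) hk with hneg | hbig'
        · exfalso
          have hb := hadj k hk
          rw [hβ, hβ] at hb
          have h1 := fmc_beta_gt_one hneg
          have h2 := fmc_beta_lt_one hbig
          linarith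
        · exact hbig'
      have hdecN : ∀ k (hk : k + 1 < n), a ⟨k, by omega⟩ < 0 → a ⟨k + 1, hk⟩ < 0 →
          a ⟨k + 1, hk⟩ < a ⟨k, by omega⟩ := by
        intro k hk h1 h2
        have hb := hadj k hk
        rw [hβ, hβ] at hb
        exact (fmc_beta_lt_neg h1 h2).mp hb
      have hdecP : ∀ k (hk : k + 1 < n), 1 < a ⟨k, by omega⟩ → 1 < a ⟨k + 1, hk⟩ →
          a ⟨k + 1, hk⟩ < a ⟨k, by omega⟩ := by
        intro k hk h1 h2
        have hb := hadj k hk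
        rw [hβ, hβ] at hb
        exact (fmc_beta_lt_pos h1 h2).mp hb
      have hbigmono : ∀ j (hj : j < n), ∀ i (hij : i ≤ j), 1 < a ⟨i, by omega⟩ → 1 < a ⟨j, hj⟩ := by
        intro j
        induction j with
        | zero =>
          intro hj i hij h
          have : i = 0 := by omega
          subst this; exact h
        | succ m ih =>
          intro hj i hij h
          rcases Nat.lt_or_ge i (m + 1) with h' | h'
          · exact hstepS m hj (ih (by omega) i (by omega) h)
          · have : i = m + 1 := by omega
            subst this; exact h
      rcases hsign 0 (by omega) with h0neg | h0big
      · rcases hsign (n - 1) hn1 with hLneg | hLbig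
        · -- all negative: P₁
          left
          have hallneg : ∀ m (hm : m < n), a ⟨m, hm⟩ < 0 := by
            intro m hm
            rcases hsign m hm with h | h
            · exact h
            · exfalso
              have := hbigmono (n - 1) hn1 m (by omega) h
              linarith
          rw [hP₁]
          refine ⟨?_, h0neg⟩
          intro i j hij
          have hi' := i.isLt
          have hj' := j.isLt
          have hij' : (i : ℕ) < (j : ℕ) := hij
          have := fmc_chain a 0 (n - 1) hn1
            (fun m _ hm2 => hdecN m (by omega) (hallneg _ _) (hallneg _ _))
            i.val j.val (by omega) hij' (by omega)
          simpa using this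
        · -- mixed: P₂
          right; left
          have hex : ∃ m, ∃ hm : m < n, 1 < a ⟨m, hm⟩ := ⟨n - 1, hn1, hLbig⟩
          have hspec := Nat.find_spec hex
          obtain ⟨hfn, hfbig⟩ := hspec
          have hfle : Nat.find hex ≤ n - 1 := Nat.find_min' hex ⟨hn1, hLbig⟩
          have hfpos : 0 < Nat.find hex := by
            rcases Nat.eq_zero_or_pos (Nat.find hex) with h | h
            · exfalso
              have : (⟨Nat.find hex, hfn⟩ : Fin n) = ⟨0, hn⟩ := by
                apply Fin.ext; simpa using h
              rw [this] at hfbig; linarith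
            · exact h
          set k := Nat.find hex - 1 with hkdef
          have hk1n : k + 1 < n := by omega
          have hk1f : k + 1 = Nat.find hex := by omega
          have hkneg : ∀ m, m ≤ k → ∀ hm : m < n, a ⟨m, hm⟩ < 0 := by
            intro m hmk hm
            rcases hsign m hm with h | h
            · exact h
            · exact absurd ⟨hm, h⟩ (Nat.find_min hex (by omega))
          have hk1big : 1 < a ⟨k + 1, hk1n⟩ := by
            have : (⟨k + 1, hk1n⟩ : Fin n) = ⟨Nat.find hex, hfn⟩ := by
              apply Fin.ext; simpa using hk1f
            rw [this]; exact hfbig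
          have hkbig : ∀ m, k < m → ∀ hm : m < n, 1 < a ⟨m, hm⟩ := by
            intro m hmk hm
            exact hbigmono m hm (k + 1) (by omega) hk1big
          rw [hP₂]
          refine ⟨⟨k, by omega⟩, by simpa using hk1n, ?_, h0neg, ?_, ?_⟩
          · intro i j hij hjk
            have hjk' : (j : ℕ) ≤ k := hjk
            have hij' : (i : ℕ) < (j : ℕ) := hij
            have := fmc_chain a 0 k (by omega)
              (fun m _ hm2 => hdecN m (by omega) (hkneg m (by omega) _) (hkneg (m+1) (by omega) _))
              i.val j.val (by omega) hij' hjk'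
            simpa using this
          · intro i j hki hij
            have hki' : k < (i : ℕ) := hki
            have hij' : (i : ℕ) < (j : ℕ) := hij
            have hj' := j.isLt
            have := fmc_chain a (k + 1) (n - 1) hn1
              (fun m hm1 hm2 => hdecP m (by omega) (hkbig m (by omega) _) (hkbig (m+1) (by omega) _))
              i.val j.val (by omega) hij' (by omega)
            simpa using this
          · exact hkbig (n - 1) (by omega) hn1
      · -- all big: P₃
        right; right
        have hallbig : ∀ m (hm : m < n), 1 < a ⟨m, hm⟩ :=
          fun m hm => hbigmono m hm 0 (by omega) h0big
        rw [hP₃]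
        refine ⟨?_, hallbig (n - 1) hn1⟩
        intro i j hij
        have hj' := j.isLt
        have hij' : (i : ℕ) < (j : ℕ) := hij
        have := fmc_chain a 0 (n - 1) hn1
          (fun m _ hm2 => hdecP m (by omega) (hallbig _ _) (hallbig _ _))
          i.val j.val (by omega) hij' (by omega)
        simpa using this
    · -- reverse direction
      intro hP
      have final : (∀ k (hk : k + 1 < n), β ⟨k + 1, hk⟩ < β ⟨k, by omega⟩) →
          0 < β ⟨n - 1, hn1⟩ → ∀ k, 0 < D k := by
        intro h1 h2 k
        rw [hD k]
        split_ifs with h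
        · have hlt : β ⟨(k : ℕ) + 1, h⟩ < β k := by
            have := h1 k.val h
            simpa using this
          linarith
        · have hk := k.isLt
          have : k = ⟨n - 1, hn1⟩ := by apply Fin.ext; simp; omega
          rw [this]; exact h2
      rcases hP with h | h | h
      · obtain ⟨hdec, h0⟩ := hP₁.mp h
        have hneg : ∀ m (hm : m < n), a ⟨m, hm⟩ < 0 := by
          intro m hm
          rcases Nat.eq_zero_or_pos m with h' | h'
          · subst h'; exact h0
          · have := hdec ⟨0, hn⟩ ⟨m, hm⟩ (by show (0:ℕ) < m; omega)
            linarith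
        apply final
        · intro k hk
          rw [hβ, hβ]
          exact (fmc_beta_lt_neg (hneg k (by omega)) (hneg (k+1) hk)).mpr
            (hdec ⟨k, by omega⟩ ⟨k + 1, hk⟩ (by show k < k + 1; omega))
        · rw [hβ]
          exact (fmc_beta_pos_iff (ha _)).mpr (Or.inl (hneg _ _))
      · obtain ⟨k, hk, hdown, h0, hup, hL⟩ := hP₂.mp h
        have hneg : ∀ m, m ≤ (k : ℕ) → ∀ hm : m < n, a ⟨m, hm⟩ < 0 := by
          intro m hmk hm
          rcases Nat.eq_zero_or_pos m with h' | h'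
          · subst h'; exact h0
          · have := hdown ⟨0, hn⟩ ⟨m, hm⟩ (by show (0:ℕ) < m; omega) hmk
            linarith
        have hbig : ∀ m, (k : ℕ) < m → ∀ hm : m < n, 1 < a ⟨m, hm⟩ := by
          intro m hmk hm
          rcases Nat.eq_or_lt_of_le (show m ≤ n - 1 by omega) with h' | h'
          · have : (⟨m, hm⟩ : Fin n) = ⟨n - 1, hn1⟩ := by apply Fin.ext; simpa using h'
            rw [this]; exact hL
          · have := hup ⟨m, hm⟩ ⟨n - 1, hn1⟩ hmk (by show m < n - 1; omega)
            linarith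
        apply final
        · intro m hm
          rw [hβ, hβ]
          rcases Nat.lt_or_ge (m + 1) ((k : ℕ) + 1) with h' | h'
          · exact (fmc_beta_lt_neg (hneg m (by omega) _) (hneg (m+1) (by omega) _)).mpr
              (hdown ⟨m, by omega⟩ ⟨m + 1, hm⟩ (by show m < m + 1; omega) (by show m + 1 ≤ (k:ℕ); omega))
          · rcases Nat.eq_or_lt_of_le h' with h'' | h''
            · have hA := hneg m (by omega) (by omega)
              have hB := hbig (m + 1) (by omega) hm
              have := fmc_beta_gt_one hA
              have := fmc_beta_lt_one hB
              linarith
            · exact (fmc_beta_lt_pos (hbig m (by omega) _) (hbig (m+1) (by omega) _)).mpr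
                (hup ⟨m, by omega⟩ ⟨m + 1, hm⟩ (by show (k:ℕ) < m; omega) (by show m < m + 1; omega))
        · rw [hβ]
          exact (fmc_beta_pos_iff (ha _)).mpr (Or.inr (hbig (n - 1) (by omega) hn1))
      · obtain ⟨hdec, hL⟩ := hP₃.mp h
        have hbig : ∀ m (hm : m < n), 1 < a ⟨m, hm⟩ := by
          intro m hm
          rcases Nat.eq_or_lt_of_le (show m ≤ n - 1 by omega) with h' | h'
          · have : (⟨m, hm⟩ : Fin n) = ⟨n - 1, hn1⟩ := by apply Fin.ext; simpa using h'
            rw [this]; exact hL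
          · have := hdec ⟨m, hm⟩ ⟨n - 1, hn1⟩ (by show m < n - 1; omega)
            linarith
        apply final
        · intro m hm
          rw [hβ, hβ]
          exact (fmc_beta_lt_pos (hbig m (by omega)) (hbig (m+1) hm)).mpr
            (hdec ⟨m, by omega⟩ ⟨m + 1, hm⟩ (by show m < m + 1; omega))
        · rw [hβ]
          exact (fmc_beta_pos_iff (ha _)).mpr (Or.inr (hbig _ _))
  constructor
  · intro hC
    rcases key.mp hC with h | h | h
    · exact Or.inl ⟨h, fun h2 => excl12 ⟨h, h2⟩, fun h3 => excl13 ⟨h, h3⟩⟩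
    · exact Or.inr (Or.inl ⟨fun h1 => excl12 ⟨h1, h⟩, h, fun h3 => excl23 ⟨h, h3⟩⟩)
    · exact Or.inr (Or.inr ⟨fun h1 => excl13 ⟨h1, h⟩, fun h2 => excl23 ⟨h2, h⟩, h⟩)
  · rintro (⟨h, -, -⟩ | ⟨-, h, -⟩ | ⟨-, -, h⟩)
    · exact key.mpr (Or.inl h)
    · exact key.mpr (Or.inr (Or.inl h))
    · exact key.mpr (Or.inr (Or.inr h))
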